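/- arXiv:1605.04591 — 5 statements merged into one kernel-verified Lean document; each statement's English description precedes it below -/
import Mathlib

section
/- Let P be an irreducible aperiodic transition matrix on X with invariant pmf π, and let Z = (I − P + 1⊗π)^{-1}. For any function U : X → ℝ, the function ĥ = Z(U − π(U)·1) satisfies Poisson's equation P ĥ = ĥ − U + π(U)·1, where π(U) = ∑_x π(x)U(x). -/
open Real Finset Matrix

/-- **Poisson's equation via the fundamental matrix.**
With `Z = (I − P + 1⊗pi)⁻¹`, the function `hh = Z (U − pi(U)·1)` satisfies
Poisson's equation `P hh = hh − U + pi(U)·1`. -/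
theorem stmt5 {X : Type*} [Fintype X] [DecidableEq X] [Nonempty X]
    (P : Matrix X X ℝ) (pi : X → ℝ)
    (hPnn : ∀ x x', 0 ≤ P x x') (hProw : ∀ x, ∑ x', P x x' = 1)
    (N : ℕ) (hirr : ∀ n ≥ N, ∀ x x', 0 < (P ^ n) x x')
    (hpinn : ∀ x, 0 ≤ pi x) (hpisum : ∑ x, pi x = 1)
    (hpiinv : ∀ x', ∑ x, pi x * P x x' = pi x')
    (M : Matrix X X ℝ) (hM : ∀ x x', M x x' = pi x')
    (Z : Matrix X X ℝ) (hZ₁ : (1 - P + M) * Z = 1) (hZ₂ : Z * (1 - P + M) = 1)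
    (U : X → ℝ)
    (hh : X → ℝ) (hhh : hh = Z.mulVec (fun x => U x - ∑ y, pi y * U y)) :
    ∀ x, ∑ x', P x x' * hh x' = hh x - U x + ∑ y, pi y * U y := by
  set c := ∑ y, pi y * U y with hc
  set v : X → ℝ := fun x => U x - c with hv
  have hMP : M * P = M := by
    ext a b
    simp only [Matrix.mul_apply, hM]
    exact hpiinv b
  have hMM : M * M = M := by
    ext a b
    simp only [Matrix.mul_apply, hM]
    rw [← Finset.sum_mul, hpisum, one_mul]
  have hMfac : M * (1 - P + M) = M := by
    rw [Matrix.mul_add, Matrix.mul_sub, Matrix.mul_one, hMP, hMM]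
    abel
  have hMZ : M * Z = M := by
    calc M * Z = (M * (1 - P + M)) * Z := by rw [hMfac]
    _ = M * ((1 - P + M) * Z) := by rw [Matrix.mul_assoc]
    _ = M := by rw [hZ₁, Matrix.mul_one]
  have hMv : M.mulVec v = 0 := by
    funext a
    simp only [Matrix.mulVec, dotProduct, hM, hv, Pi.zero_apply]
    simp [mul_sub, Finset.sum_sub_distrib, ← Finset.sum_mul, hpisum, hc]
  have hMhh : M.mulVec hh = 0 := by
    rw [hhh, Matrix.mulVec_mulVec, hMZ, hMv]
  have key : hh - P.mulVec hh + M.mulVec hh = v := by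
    have h := congrArg (fun A => A.mulVec v) hZ₁
    rw [← Matrix.mulVec_mulVec, Matrix.one_mulVec, Matrix.add_mulVec,
      Matrix.sub_mulVec, Matrix.one_mulVec, ← hhh] at h
    exact h
  intro x
  have := congrFun key x
  simp only [Pi.add_apply, Pi.sub_apply, hMhh, Pi.zero_apply, hv] at this
  have hP : P.mulVec hh x = ∑ x', P x x' * hh x' := rfl
  rw [hP] at this
  linarith
end

section
/- Let h : X → ℝ, and let ν be the pmf ν(x) = P_h(x°, x) for a fixed state x°, where P_h is an irreducible aperiodic transition matrix. Then I − P_h + 1⊗ν is invertible with inverse Z_h = ∑_{n=0}^∞ (P_h − 1⊗ν)ⁿ, and moreover (P_h − 1⊗ν)ⁿ = P_hⁿ − 1⊗(ν P_h^{n−1}) for all n ≥ 1. -/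
/-!
Write `Q = P_h − 1⊗ν`. Since `P_h` is stochastic, `P_h (1⊗ν) = 1⊗ν` and `(1⊗ν)² = 1⊗ν`, which
gives `Qⁿ⁺¹ = Q P_hⁿ = P_hⁿ⁺¹ − (1⊗ν) P_hⁿ`. The rows of `Q` sum to zero, and on zero-sum row
vectors a power `P_hᵐ` with all entries `≥ ε` contracts the `ℓ¹` norm by `1 − dε < 1` (Doeblin),
so the Neumann series `∑ Qⁿ` converges and inverts `1 − Q = I − P_h + 1⊗ν`.
-/

open Finset Matrix

lemma pow_mul_eq_of_mul_eq {R : Type*} [Monoid R] {a e : R} (h : a * e = e) (n : ℕ) :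
    a ^ n * e = e := by
  induction n with
  | zero => rw [pow_zero, one_mul]
  | succ n ih => rw [pow_succ, mul_assoc, h, ih]

lemma sub_pow_succ_of_mul_eq {R : Type*} [Ring R] {a e : R} (hae : a * e = e) (hee : e * e = e)
    (n : ℕ) : (a - e) ^ (n + 1) = (a - e) * a ^ n := by
  induction n with
  | zero => rw [zero_add, pow_one, pow_zero, mul_one]
  | succ n ih =>
    rw [pow_succ, ih, mul_assoc, mul_sub (a ^ n), pow_mul_eq_of_mul_eq hae, ← pow_succ,
      mul_sub (a - e), sub_mul a e e, hae, hee, sub_self, sub_zero]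

lemma summable_of_antitone_of_le_geometric {f : ℕ → ℝ} (hf : Antitone f) (hf0 : ∀ n, 0 ≤ f n)
    {m : ℕ} (hm : m ≠ 0) {C r : ℝ} (hr0 : 0 ≤ r) (hr1 : r < 1)
    (hfm : ∀ k, f (m * k) ≤ r ^ k * C) : Summable f := by
  have : NeZero m := ⟨hm⟩
  rw [← summable_indicator_mod_iff hf (0 : ZMod m), ← Nat.cast_zero,
    summable_indicator_mod_iff_summable]
  exact ((summable_geometric_of_lt_one hr0 hr1).mul_right C).of_nonneg_of_le (fun _ => hf0 _) hfm

namespace Matrix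

variable {l n o : Type*} [Fintype n]

lemma mul_replicateRow_of_sum_eq_one {R : Type*} [Semiring R] {A : Matrix l n R}
    (hA : ∀ i, ∑ j, A i j = 1) (v : o → R) : A * replicateRow n v = replicateRow l v := by
  ext i j
  simp [mul_apply, ← sum_mul, hA]

lemma sum_abs_vecMul_le_mul {A : Matrix n l ℝ} [Fintype l] (hA : ∀ i j, 0 ≤ A i j) {c : ℝ}
    (hc : ∀ i, ∑ j, A i j = c) (w : n → ℝ) : ∑ j, |(w ᵥ* A) j| ≤ c * ∑ i, |w i| :=
  calc ∑ j, |(w ᵥ* A) j| ≤ ∑ j, ∑ i, |w i| * A i j :=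
        sum_le_sum fun j _ => (abs_sum_le_sum_abs _ _).trans_eq <|
          sum_congr rfl fun i _ => by rw [abs_mul, abs_of_nonneg (hA i j)]
    _ = ∑ i, |w i| * ∑ j, A i j := by rw [sum_comm]; simp only [mul_sum]
    _ = c * ∑ i, |w i| := by simp only [hc, mul_comm, mul_sum]

variable [DecidableEq n] {P : Matrix n n ℝ}

lemma sum_vecMul_of_mem_rowStochastic (hP : P ∈ rowStochastic ℝ n) (w : n → ℝ) :
    ∑ j, (w ᵥ* P) j = ∑ i, w i := by
  rw [← dotProduct_one, ← dotProduct_mulVec, hP.2, dotProduct_one]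

lemma sum_abs_vecMul_le_of_mem_rowStochastic (hP : P ∈ rowStochastic ℝ n) (w : n → ℝ) :
    ∑ j, |(w ᵥ* P) j| ≤ ∑ i, |w i| := by
  simpa using sum_abs_vecMul_le_mul hP.1 (sum_row_of_mem_rowStochastic hP) w

lemma card_mul_le_one_of_le (hP : P ∈ rowStochastic ℝ n) {ε : ℝ} (hε : ∀ i j, ε ≤ P i j) :
    Fintype.card n * ε ≤ 1 := by
  rcases isEmpty_or_nonempty n with _ | ⟨⟨i⟩⟩
  · simp
  · calc Fintype.card n * ε = ∑ j, ε := by simp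
      _ ≤ ∑ j, P i j := sum_le_sum fun j _ => hε i j
      _ = 1 := sum_row_of_mem_rowStochastic hP i

/-- Doeblin's contraction: subtracting `ε` from every entry does not change `w ᵥ* P` when `w`
has zero sum, and leaves a nonnegative matrix with row sums `1 − dε`. -/
lemma sum_abs_vecMul_le_of_le (hP : P ∈ rowStochastic ℝ n) {ε : ℝ} (hε : ∀ i j, ε ≤ P i j)
    {w : n → ℝ} (hw : ∑ i, w i = 0) :
    ∑ j, |(w ᵥ* P) j| ≤ (1 - Fintype.card n * ε) * ∑ i, |w i| := by
  have hshift : w ᵥ* P = w ᵥ* (P - of fun _ _ => ε) := by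
    ext j
    simp [vecMul, dotProduct, mul_sub, sum_sub_distrib, ← sum_mul, hw]
  rw [hshift]
  refine sum_abs_vecMul_le_mul (fun i j => sub_nonneg.2 (hε i j)) (fun i => ?_) w
  simp [sum_sub_distrib, sum_row_of_mem_rowStochastic hP]

lemma sum_abs_vecMul_pow_mul_le (hP : P ∈ rowStochastic ℝ n) {m : ℕ} {ε : ℝ}
    (hε : ∀ i j, ε ≤ (P ^ m) i j) {w : n → ℝ} (hw : ∑ i, w i = 0) (k : ℕ) :
    ∑ j, |(w ᵥ* P ^ (m * k)) j| ≤ (1 - Fintype.card n * ε) ^ k * ∑ i, |w i| := by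
  have hPm : P ^ m ∈ rowStochastic ℝ n := pow_mem hP m
  induction k with
  | zero => simp
  | succ k ih =>
    have hwk : ∑ i, (w ᵥ* P ^ (m * k)) i = 0 := by
      rw [sum_vecMul_of_mem_rowStochastic (pow_mem hP _), hw]
    rw [mul_add_one, pow_add, ← vecMul_vecMul, pow_succ, mul_comm _ (1 - _), mul_assoc]
    exact (sum_abs_vecMul_le_of_le hPm hε hwk).trans <| mul_le_mul_of_nonneg_left ih <|
      sub_nonneg.2 (card_mul_le_one_of_le hPm hε)

variable [Nonempty n]

lemma summable_sum_abs_vecMul_pow (hP : P ∈ rowStochastic ℝ n) {m : ℕ} (hm : m ≠ 0) {ε : ℝ}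
    (hε0 : 0 < ε) (hε : ∀ i j, ε ≤ (P ^ m) i j) {w : n → ℝ} (hw : ∑ i, w i = 0) :
    Summable fun k => ∑ j, |(w ᵥ* P ^ k) j| := by
  refine summable_of_antitone_of_le_geometric (antitone_nat_of_succ_le fun k => ?_)
    (fun k => sum_nonneg fun j _ => abs_nonneg _) hm
    (sub_nonneg.2 (card_mul_le_one_of_le (pow_mem hP m) hε)) ?_
    (sum_abs_vecMul_pow_mul_le hP hε hw)
  · rw [pow_succ, ← vecMul_vecMul]
    exact sum_abs_vecMul_le_of_mem_rowStochastic hP _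
  · have : (0 : ℝ) < Fintype.card n := mod_cast Fintype.card_pos
    nlinarith

lemma summable_mul_pow (hP : P ∈ rowStochastic ℝ n) {m : ℕ} (hm : m ≠ 0) {ε : ℝ}
    (hε0 : 0 < ε) (hε : ∀ i j, ε ≤ (P ^ m) i j) {A : Matrix l n ℝ} (hA : ∀ i, ∑ j, A i j = 0) :
    Summable fun k => A * P ^ k :=
  Pi.summable.2 fun i => Pi.summable.2 fun j =>
    (summable_sum_abs_vecMul_pow hP hm hε0 hε (hA i)).of_norm_bounded fun k =>
      single_le_sum (f := fun j => |(A i ᵥ* P ^ k) j|) (fun _ _ => abs_nonneg _) (mem_univ j)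

end Matrix

/-- **Lemma B.2(i):** with `ν(x) = P_h(x°,x)`, the matrix `I − P_h + 1⊗ν` is
invertible with inverse `Z_h = ∑ₙ (P_h − 1⊗ν)ⁿ`, and
`(P_h − 1⊗ν)ⁿ = P_hⁿ − 1⊗(ν P_h^{n−1})` for `n ≥ 1`. -/
theorem stmt7 {X : Type*} [Fintype X] [DecidableEq X] [Nonempty X]
    (Ph : Matrix X X ℝ)
    (hnn : ∀ x x', 0 ≤ Ph x x') (hrow : ∀ x, ∑ x', Ph x x' = 1)
    (N : ℕ) (hirr : ∀ n ≥ N, ∀ x x', 0 < (Ph ^ n) x x')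
    (xo : X) (ν : X → ℝ) (hν : ∀ x, ν x = Ph xo x)
    (M : Matrix X X ℝ) (hM : ∀ x x', M x x' = ν x') :
    (1 - Ph + M) * (∑' n : ℕ, (Ph - M) ^ n) = 1 ∧
    (∑' n : ℕ, (Ph - M) ^ n) * (1 - Ph + M) = 1 ∧
    (∀ n : ℕ, 1 ≤ n →
      (Ph - M) ^ n = Ph ^ n - Matrix.of (fun _ x' => (Matrix.vecMul ν (Ph ^ (n - 1))) x')) := by
  have hP : Ph ∈ rowStochastic ℝ X := mem_rowStochastic_iff_sum.2 ⟨hnn, hrow⟩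
  have hMν : M = replicateRow X ν := by ext; exact hM _ _
  have hν1 : ∑ x, ν x = 1 := by simp only [hν, hrow]
  have hpow := sub_pow_succ_of_mul_eq (hMν ▸ mul_replicateRow_of_sum_eq_one hrow ν)
    (hMν ▸ mul_replicateRow_of_sum_eq_one (fun _ => hν1) ν)
  have hsum : Summable fun n => (Ph - M) ^ n := by
    obtain ⟨p, hp⟩ := Finite.exists_min fun p : X × X => (Ph ^ (N + 1)) p.1 p.2
    rw [← summable_nat_add_iff 1]
    simp only [hpow]
    refine summable_mul_pow hP N.succ_ne_zero (hirr _ N.le_succ _ _) (fun i j => hp (i, j))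
      fun i => ?_
    simp [sum_sub_distrib, hrow, hM, hν1]
  rw [show 1 - Ph + M = 1 - (Ph - M) by abel]
  refine ⟨hsum.one_sub_mul_tsum_pow, hsum.tsum_pow_mul_one_sub, fun n hn => ?_⟩
  obtain ⟨k, rfl⟩ := Nat.exists_eq_add_of_le' hn
  rw [hpow, sub_mul, ← pow_succ', hMν, ← replicateRow_vecMul, Nat.add_sub_cancel]
  rfl
end

section
/- Conversely, with the setup above, if Π(x,x_u') = π(x)R(x,x_u') is absolutely continuous with respect to Π₀(x,x_u') = π₀(x)R₀(x,x_u'), then K(P‖P₀) = ∑_{x,x'} π(x)P(x,x') log(P(x,x')/P₀(x,x')) is finite (all terms are well defined with the convention 0 log 0 = 0). -/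
theorem stmt11_general {Xu Xn : Type*}
    (R R₀ : Xu × Xn → Xu → ℝ) (Q₀ : Xu × Xn → Xn → ℝ)
    (hR₀nn : ∀ x xu', 0 ≤ R₀ x xu')
    (hQ₀nn : ∀ x xn', 0 ≤ Q₀ x xn')
    (P P₀ : Xu × Xn → Xu × Xn → ℝ)
    (hP : ∀ x x', P x x' = R x x'.1 * Q₀ x x'.2)
    (hP₀ : ∀ x x', P₀ x x' = R₀ x x'.1 * Q₀ x x'.2)
    (pi pi₀ : Xu × Xn → ℝ)
    -- absolute continuity `Π ≪ Π₀`
    (hac : ∀ x xu', pi₀ x * R₀ x xu' = 0 → pi x * R x xu' = 0) :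
    ∀ x x', 0 < pi x * P x x' → 0 < P₀ x x' := by
  intro x x' hpos
  rw [hP, ← mul_assoc] at hpos
  have hpiR : pi x * R x x'.1 ≠ 0 := left_ne_zero_of_mul hpos.ne'
  have hQ₀ : Q₀ x x'.2 ≠ 0 := right_ne_zero_of_mul hpos.ne'
  have hR₀ : R₀ x x'.1 ≠ 0 := right_ne_zero_of_mul (mt (hac x x'.1) hpiR)
  rw [hP₀]
  exact mul_pos ((hR₀nn _ _).lt_of_ne' hR₀) ((hQ₀nn _ _).lt_of_ne' hQ₀)

/-- **Lemma 3.3 (⇐):** if `Π(x,x_u') = π(x)R(x,x_u')` is absolutely continuous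
w.r.t. `Π₀(x,x_u') = π₀(x)R₀(x,x_u')`, then the Donsker–Varadhan rate
`K(P‖P₀)` is finite, i.e. every term of the sum is well defined:
whenever `π(x)P(x,x') > 0` also `P₀(x,x') > 0` (convention `0 log 0 = 0`). -/
theorem stmt11 {Xu Xn : Type*} [Fintype Xu] [Fintype Xn] [Nonempty Xu] [Nonempty Xn]
    (R R₀ : Xu × Xn → Xu → ℝ) (Q₀ : Xu × Xn → Xn → ℝ)
    (hRnn : ∀ x xu', 0 ≤ R x xu') (hRrow : ∀ x, ∑ xu', R x xu' = 1)
    (hR₀nn : ∀ x xu', 0 ≤ R₀ x xu') (hR₀row : ∀ x, ∑ xu', R₀ x xu' = 1)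
    (hQ₀nn : ∀ x xn', 0 ≤ Q₀ x xn') (hQ₀row : ∀ x, ∑ xn', Q₀ x xn' = 1)
    (P P₀ : Xu × Xn → Xu × Xn → ℝ)
    (hP : ∀ x x', P x x' = R x x'.1 * Q₀ x x'.2)
    (hP₀ : ∀ x x', P₀ x x' = R₀ x x'.1 * Q₀ x x'.2)
    (pi pi₀ : Xu × Xn → ℝ)
    (hπnn : ∀ x, 0 ≤ pi x) (hπsum : ∑ x, pi x = 1)
    (hπinv : ∀ x', ∑ x, pi x * P x x' = pi x')
    (hπ₀nn : ∀ x, 0 ≤ pi₀ x) (hπ₀sum : ∑ x, pi₀ x = 1)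
    (hπ₀inv : ∀ x', ∑ x, pi₀ x * P₀ x x' = pi₀ x')
    -- absolute continuity `Π ≪ Π₀`
    (hac : ∀ x xu', pi₀ x * R₀ x xu' = 0 → pi x * R x xu' = 0) :
    ∀ x x', 0 < pi x * P x x' → 0 < P₀ x x' :=
  stmt11_general R R₀ Q₀ hR₀nn hQ₀nn P P₀ hP hP₀ pi pi₀ hac
end

section
/- In Brockett's example with rate matrices A = [[−1,1,0],[1,−2,1],[0,1,−1]] and B = [[−1,1,0],[0,0,0],[0,1,−1]], with cost c(1)=c(3)=3, c(2)=0 and cost function ζ·c(x) + u²/2, the policy φ*(1) = φ*(3) = −3 + √(9+6ζ), φ*(2) = 0, together with relative value function g(1) = g(3) = ξ_ζ = −3 + √(9+6ζ), g(2) = 0, and average cost γ*_ζ = −6 + 2√(9+6ζ), satisfies the continuous-time average-cost optimality equation min_{u > −1} { ζc(x) + u²/2 + (A + uB)g(x) } = γ*_ζ for each state x ∈ {1,2,3} and each ζ ∈ (−5/6, ∞). -/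
open Real Finset

/-- **Brockett's three-state example:** the policy
`φ*(1)=φ*(3)=−3+√(9+6ζ)`, `φ*(2)=0`, relative value function
`g=(ξ_ζ,0,ξ_ζ)` with `ξ_ζ=−3+√(9+6ζ)`, and average cost
`γ*_ζ=−6+2√(9+6ζ)` satisfy the continuous-time average-cost optimality
equation `min_{u>−1} { ζκ(x) + u²/2 + (A+uB)g(x) } = γ*_ζ`
for each state `x` and each `ζ ∈ (−5/6,∞)`, with `κ=(3,0,3)`. -/
theorem stmt16
    (A B : Matrix (Fin 3) (Fin 3) ℝ)
    (hA : A = !![-1, 1, 0; 1, -2, 1; 0, 1, -1])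
    (hB : B = !![-1, 1, 0; 0, 0, 0; 0, 1, -1])
    (κ : Fin 3 → ℝ) (hκ : κ = ![3, 0, 3])
    (g : ℝ → Fin 3 → ℝ)
    (hg : ∀ ζ, g ζ = ![-3 + Real.sqrt (9 + 6 * ζ), 0, -3 + Real.sqrt (9 + 6 * ζ)])
    (γ : ℝ → ℝ) (hγ : ∀ ζ, γ ζ = -6 + 2 * Real.sqrt (9 + 6 * ζ)) :
    ∀ ζ : ℝ, -5/6 < ζ → ∀ x : Fin 3,
      IsLeast
        {v : ℝ | ∃ u : ℝ, -1 < u ∧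
          v = ζ * κ x + u ^ 2 / 2 + ∑ x', (A x x' + u * B x x') * g ζ x'}
        (γ ζ) := by
  intro ζ hζ x
  subst hA hB hκ
  set s := Real.sqrt (9 + 6 * ζ) with hs
  have hpos : (0:ℝ) < 9 + 6 * ζ := by linarith
  have hsq : s ^ 2 = 9 + 6 * ζ := Real.sq_sqrt hpos.le
  have hs2 : 2 < s := by
    have : Real.sqrt 4 < s := Real.sqrt_lt_sqrt (by norm_num) (by linarith)
    have h4 : Real.sqrt 4 = 2 := by
      rw [show (4:ℝ) = 2^2 by norm_num, Real.sqrt_sq (by norm_num)]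
    linarith
  rw [hg, hγ]
  fin_cases x
  · refine ⟨⟨-3 + s, by linarith, ?_⟩, ?_⟩
    · simp [Fin.sum_univ_three]; nlinarith
    · rintro v ⟨u, hu, rfl⟩
      simp [Fin.sum_univ_three, ← hs]
      nlinarith [sq_nonneg (u - (-3 + s))]
  · refine ⟨⟨0, by norm_num, ?_⟩, ?_⟩
    · simp [Fin.sum_univ_three]; ring
    · rintro v ⟨u, hu, rfl⟩
      simp [Fin.sum_univ_three, ← hs]
      nlinarith [sq_nonneg u]
  · refine ⟨⟨-3 + s, by linarith, ?_⟩, ?_⟩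
    · simp [Fin.sum_univ_three]; nlinarith
    · rintro v ⟨u, hu, rfl⟩
      simp [Fin.sum_univ_three, ← hs]
      nlinarith [sq_nonneg (u - (-3 + s))]
end

section
/- Suppose (h*, η*) solves the fixed point equation ζU(x) + Λ_{h*}(x) = h*(x) + η* for all x ∈ X, where Λ_{h*}(x) = log ∑_{x'} P₀(x,x') exp(h*(x'_u|x)) with h*(x'_u|x) = ∑_{x_n'} Q₀(x,x_n')h*(x_u',x_n'). Then (h*, η*) solves the average-reward optimality equation: for every x, max over row-pmfs R(x,·) ≪ R₀(x,·) of { ζU(x) − ∑_{x_u'} R(x,x_u') log(R(x,x_u')/R₀(x,x_u')) + ∑_{x'} R(x,x_u')Q₀(x,x_n') h*(x') } = h*(x) + η*, and the maximizer is Ř(x,x_u') = R₀(x,x_u') exp(h*(x_u'|x) − Λ_{h*}(x)). -/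
/-!
Donsker–Varadhan duality on a finite set: for positive weights `w` and a payoff `F`, the functional
`μ ↦ μ(F) − ∑ μ log (μ / w)` on probability vectors is at most `log ∑ w e^F`, by summing the
Fenchel–Young inequality `m a − m log (m / w) ≤ w e^a − m` (that is, `log t ≤ t − 1`) at
`a = F − log ∑ w e^F`; equality holds at the Gibbs weights `w e^{F − log ∑ w e^F}`.
Because `Q₀(x, ·)` sums to one, `Λ_{h*}(x)` is exactly this log-normalizer for `w = R₀(x, ·)` and
`F = h*(· | x)`, and the objective's last sum is `∑ R h*(· | x)`; the fixed point equation then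
identifies the maximum `ζU(x) + Λ_{h*}(x)` with `h*(x) + η*`.
-/

open Real Finset

theorem mul_sub_mul_log_div_le {m w : ℝ} (a : ℝ) (hm : 0 ≤ m) (hw : 0 < w) :
    m * a - m * log (m / w) ≤ w * exp a - m := by
  rcases hm.eq_or_lt with rfl | hm
  · simp only [zero_mul, sub_zero, zero_div, log_zero]
    positivity
  · have hlog : log (w * exp a / m) = a - log (m / w) := by
      rw [mul_comm, mul_div_assoc, log_mul (exp_pos a).ne' (div_pos hw hm).ne', log_exp,
        ← inv_div, log_inv, sub_eq_add_neg]
    have hcancel : m * (w * exp a / m - 1) = w * exp a - m := by field_simp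
    have := mul_le_mul_of_nonneg_left (log_le_sub_one_of_pos (by positivity : 0 < w * exp a / m))
      hm.le
    rw [hlog, hcancel] at this
    linarith

theorem sum_prod_mul_mul_eq_sum_mul_sum {α β : Type*} [Fintype α] [Fintype β] (r : α → ℝ)
    (q : β → ℝ) (f : α × β → ℝ) :
    ∑ p : α × β, r p.1 * q p.2 * f p = ∑ a, r a * ∑ b, q b * f (a, b) := by
  simp only [Fintype.sum_prod_type, mul_sum, mul_assoc]

noncomputable def gibbsWeights {ι : Type*} [Fintype ι] (w F : ι → ℝ) (i : ι) : ℝ :=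
  w i * exp (F i - log (∑ j, w j * exp (F j)))

section Gibbs

variable {ι : Type*} [Fintype ι] {w : ι → ℝ} (F : ι → ℝ)

theorem gibbsWeights_pos (hw : ∀ i, 0 < w i) (i : ι) : 0 < gibbsWeights w F i :=
  mul_pos (hw i) (exp_pos _)

theorem sum_gibbsWeights [Nonempty ι] (hw : ∀ i, 0 < w i) : ∑ i, gibbsWeights w F i = 1 := by
  have hZ : 0 < ∑ j, w j * exp (F j) := sum_pos (fun i _ => by have := hw i; positivity)
    univ_nonempty
  simp only [gibbsWeights, exp_sub, exp_log hZ, mul_div_assoc', ← sum_div, div_self hZ.ne']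

theorem sum_mul_sub_sum_mul_log_div_le_log_sum_mul_exp (hw : ∀ i, 0 < w i) {μ : ι → ℝ}
    (hμ : ∀ i, 0 ≤ μ i) (hμ₁ : ∑ i, μ i = 1) :
    ∑ i, μ i * F i - ∑ i, μ i * log (μ i / w i) ≤ log (∑ i, w i * exp (F i)) := by
  have : Nonempty ι := by
    obtain ⟨i, -⟩ := nonempty_of_sum_ne_zero (hμ₁ ▸ one_ne_zero : ∑ i, μ i ≠ 0)
    exact ⟨i⟩
  have := sum_le_sum fun i (_ : i ∈ univ) =>
    mul_sub_mul_log_div_le (F i - log (∑ j, w j * exp (F j))) (hμ i) (hw i)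
  have hgibbs : ∑ i, w i * exp (F i - log (∑ j, w j * exp (F j))) = 1 := sum_gibbsWeights F hw
  simp only [sum_sub_distrib, mul_sub, ← sum_mul, hμ₁, hgibbs] at this
  linarith

theorem sum_gibbsWeights_mul_sub_sum_gibbsWeights_mul_log_div [Nonempty ι]
    (hw : ∀ i, 0 < w i) :
    ∑ i, gibbsWeights w F i * F i - ∑ i, gibbsWeights w F i * log (gibbsWeights w F i / w i) =
      log (∑ i, w i * exp (F i)) := by
  have hlog (i : ι) : log (gibbsWeights w F i / w i) = F i - log (∑ j, w j * exp (F j)) := by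
    rw [gibbsWeights, mul_div_cancel_left₀ _ (hw i).ne', log_exp]
  simp only [hlog, mul_sub, sum_sub_distrib, ← sum_mul, sum_gibbsWeights F hw, one_mul]
  ring

end Gibbs

theorem stmt19_general {Xu Xn : Type*} [Fintype Xu] [Fintype Xn] [Nonempty Xu]
    (R₀ : Xu × Xn → Xu → ℝ) (Q₀ : Xu × Xn → Xn → ℝ)
    (hR₀pos : ∀ x xu', 0 < R₀ x xu')
    (hQ₀row : ∀ x, ∑ xn', Q₀ x xn' = 1)
    (P₀ : Xu × Xn → Xu × Xn → ℝ)
    (hP₀ : ∀ x x', P₀ x x' = R₀ x x'.1 * Q₀ x x'.2)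
    (U h : Xu × Xn → ℝ) (ζ η : ℝ)
    -- conditional function and log-normalizer
    (hcond : Xu × Xn → Xu → ℝ)
    (hhcond : ∀ x xu', hcond x xu' = ∑ xn', Q₀ x xn' * h (xu', xn'))
    (Λ : Xu × Xn → ℝ)
    (hΛ : ∀ x, Λ x = Real.log (∑ x', P₀ x x' * Real.exp (hcond x x'.1)))
    -- fixed point equation `ζU + Λ_{h*} = h* + η*`
    (hfix : ∀ x, ζ * U x + Λ x = h x + η) :
    ∀ x : Xu × Xn,
      IsGreatest
        {v : ℝ | ∃ R : Xu → ℝ, (∀ xu', 0 ≤ R xu') ∧ (∑ xu', R xu' = 1) ∧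
          v = ζ * U x
              - (∑ xu', R xu' * Real.log (R xu' / R₀ x xu'))
              + ∑ x' : Xu × Xn, R x'.1 * Q₀ x x'.2 * h x'}
        (h x + η)
      ∧
      (ζ * U x
        - (∑ xu', (R₀ x xu' * Real.exp (hcond x xu' - Λ x)) *
            Real.log ((R₀ x xu' * Real.exp (hcond x xu' - Λ x)) / R₀ x xu'))
        + ∑ x' : Xu × Xn,
            (R₀ x x'.1 * Real.exp (hcond x x'.1 - Λ x)) * Q₀ x x'.2 * h x')
        = h x + η := by
  intro x
  have hmarginal (R : Xu → ℝ) : ∑ x', R x'.1 * Q₀ x x'.2 * h x' = ∑ i, R i * hcond x i := by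
    simp only [sum_prod_mul_mul_eq_sum_mul_sum, hhcond]
  have hΛx : Λ x = log (∑ i, R₀ x i * exp (hcond x i)) := by
    simp only [hΛ, hP₀, sum_prod_mul_mul_eq_sum_mul_sum (R₀ x) (Q₀ x) fun x' => exp (hcond x x'.1),
      ← sum_mul, hQ₀row, one_mul]
  rw [← hfix x, hΛx]
  have hvalue : ζ * U x + log (∑ i, R₀ x i * exp (hcond x i)) =
      ζ * U x - ∑ i, gibbsWeights (R₀ x) (hcond x) i *
        log (gibbsWeights (R₀ x) (hcond x) i / R₀ x i) +
      ∑ x', gibbsWeights (R₀ x) (hcond x) x'.1 * Q₀ x x'.2 * h x' := by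
    rw [hmarginal]
    linarith [sum_gibbsWeights_mul_sub_sum_gibbsWeights_mul_log_div (hcond x) (hR₀pos x)]
  refine ⟨⟨⟨gibbsWeights (R₀ x) (hcond x), fun i => (gibbsWeights_pos _ (hR₀pos x) i).le,
    sum_gibbsWeights _ (hR₀pos x), hvalue⟩, ?_⟩, hvalue.symm⟩
  rintro v ⟨R, hR, hR₁, rfl⟩
  rw [hmarginal]
  linarith [sum_mul_sub_sum_mul_log_div_le_log_sum_mul_exp (hcond x) (hR₀pos x) hR hR₁]

/-- **Proposition A.2:** if `(h*, η*)` solves the fixed point equation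
`ζU(x) + Λ_{h*}(x) = h*(x) + η*`, where
`Λ_{h*}(x) = log ∑_{x'} P₀(x,x') exp(h*(x_u'|x))` with
`h*(x_u'|x) = ∑_{x_n'} Q₀(x,x_n')h*(x_u',x_n')` and `P₀ = R₀·Q₀`,
then `(h*, η*)` solves the average-reward optimality equation, and the
maximizing row is the twisted kernel
`Ř(x,x_u') = R₀(x,x_u') exp(h*(x_u'|x) − Λ_{h*}(x))`. -/
theorem stmt19 {Xu Xn : Type*} [Fintype Xu] [Fintype Xn] [Nonempty Xu] [Nonempty Xn]
    (R₀ : Xu × Xn → Xu → ℝ) (Q₀ : Xu × Xn → Xn → ℝ)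
    (hR₀pos : ∀ x xu', 0 < R₀ x xu') (hR₀row : ∀ x, ∑ xu', R₀ x xu' = 1)
    (hQ₀nn : ∀ x xn', 0 ≤ Q₀ x xn') (hQ₀row : ∀ x, ∑ xn', Q₀ x xn' = 1)
    (P₀ : Xu × Xn → Xu × Xn → ℝ)
    (hP₀ : ∀ x x', P₀ x x' = R₀ x x'.1 * Q₀ x x'.2)
    (U h : Xu × Xn → ℝ) (ζ η : ℝ)
    -- conditional function and log-normalizer
    (hcond : Xu × Xn → Xu → ℝ)
    (hhcond : ∀ x xu', hcond x xu' = ∑ xn', Q₀ x xn' * h (xu', xn'))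
    (Λ : Xu × Xn → ℝ)
    (hΛ : ∀ x, Λ x = Real.log (∑ x', P₀ x x' * Real.exp (hcond x x'.1)))
    -- fixed point equation `ζU + Λ_{h*} = h* + η*`
    (hfix : ∀ x, ζ * U x + Λ x = h x + η) :
    ∀ x : Xu × Xn,
      IsGreatest
        {v : ℝ | ∃ R : Xu → ℝ, (∀ xu', 0 ≤ R xu') ∧ (∑ xu', R xu' = 1) ∧
          v = ζ * U x
              - (∑ xu', R xu' * Real.log (R xu' / R₀ x xu'))
              + ∑ x' : Xu × Xn, R x'.1 * Q₀ x x'.2 * h x'}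
        (h x + η)
      ∧
      (ζ * U x
        - (∑ xu', (R₀ x xu' * Real.exp (hcond x xu' - Λ x)) *
            Real.log ((R₀ x xu' * Real.exp (hcond x xu' - Λ x)) / R₀ x xu'))
        + ∑ x' : Xu × Xn,
            (R₀ x x'.1 * Real.exp (hcond x x'.1 - Λ x)) * Q₀ x x'.2 * h x')
        = h x + η :=
  stmt19_general R₀ Q₀ hR₀pos hQ₀row P₀ hP₀ U h ζ η hcond hhcond Λ hΛ hfix
end
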